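/- Let γ_c be the unique real number in (0,1) satisfying 1 − γ + (1−γ)²/γ + (1−γ)³/γ² = 1 (numerically γ_c ≈ 0.56984). Then, on the five-attribute set {A, B, C, D, H}, for every confidence parameter γ with 0 < γ < 1, the entailment {B} → {A,C,H}, {C} → {A,D}, {D} → {A,B} ⊨_γ {B,C,D,H} → {A} holds if and only if γ ≥ γ_c. -/

import Mathlib

open Finset

/-- Number of transactions in the dataset `D` that cover `X`, counted with multiplicity. -/
def cntD {n : ℕ} (D : Multiset (Finset (Fin n))) (X : Finset (Fin n)) : ℕ :=
  (D.filter (fun Z => X ⊆ Z)).card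

/-- `D ⊨_γ X → Y` : either no transaction covers `X`, or the confidence of `X → Y` is ≥ γ. -/
def satPI {n : ℕ} (γ : ℝ) (D : Multiset (Finset (Fin n))) (X Y : Finset (Fin n)) : Prop :=
  cntD D X = 0 ∨ γ * (cntD D X : ℝ) ≤ (cntD D (X ∪ Y) : ℝ)

/-- Entailment at confidence threshold γ from the premises indexed by `L`. -/
def entailsFrom {n k : ℕ} (γ : ℝ) (P : Fin k → Finset (Fin n) × Finset (Fin n))
    (L : Finset (Fin k)) (X₀ Y₀ : Finset (Fin n)) : Prop :=
  ∀ D : Multiset (Finset (Fin n)),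
    (∀ i ∈ L, satPI γ D (P i).1 (P i).2) → satPI γ D X₀ Y₀

/-- Proper entailment from the premises indexed by `L`: the entailment holds,
and it fails from every proper subset of the premises. -/
def properFrom {n k : ℕ} (γ : ℝ) (P : Fin k → Finset (Fin n) × Finset (Fin n))
    (L : Finset (Fin k)) (X₀ Y₀ : Finset (Fin n)) : Prop :=
  entailsFrom γ P L X₀ Y₀ ∧ ∀ L' ⊂ L, ¬ entailsFrom γ P L' X₀ Y₀

/-- The weight `w_Z(X → Y)`: `1-γ` if `Z` witnesses, `-γ` if `Z` violates, `0` otherwise. -/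
noncomputable def wt {n : ℕ} (γ : ℝ) (Z X Y : Finset (Fin n)) : ℝ :=
  if X ∪ Y ⊆ Z then 1 - γ else if X ⊆ Z then -γ else 0

/-- The premises indexed by `L` enforce homogeneity. -/
def homogFrom {n k : ℕ} (P : Fin k → Finset (Fin n) × Finset (Fin n))
    (L : Finset (Fin k)) : Prop :=
  ∀ Z : Finset (Fin n),
    (∀ i ∈ L, ¬ (P i).1 ⊆ Z ∨ (P i).1 ∪ (P i).2 ⊆ Z) →
    ((∀ i ∈ L, ¬ (P i).1 ⊆ Z) ∨ (∀ i ∈ L, (P i).1 ∪ (P i).2 ⊆ Z))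

/-- The critical threshold `γ*({Xᵢ → Yᵢ : i ∈ L}, X)`. -/
noncomputable def gammaStar {n k : ℕ} (P : Fin k → Finset (Fin n) × Finset (Fin n))
    (L : Finset (Fin k)) (X : Finset (Fin n)) : ℝ :=
  sInf { r : ℝ | ∃ lam : Fin k → ℝ, (∀ i ∈ L, 0 ≤ lam i) ∧ (∑ i ∈ L, lam i) = 1 ∧
    r = (Finset.univ.filter (fun Z : Finset (Fin n) => ¬ X ⊆ Z)).fold max 0
          (fun Z => (∑ i ∈ L.filter (fun i => (P i).1 ∪ (P i).2 ⊆ Z), lam i) /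
                    (∑ i ∈ L.filter (fun i => (P i).1 ⊆ Z), lam i)) }

/-!
Attributes `A, B, C, D, H` are `0, 1, 2, 3, 4`. The defining equation of `γc` is equivalent to
`(1 - γc)² = γc³` (with `r = γ/(1-γ)`: `r³ = r + 1`, so `r` is the plastic number), and
`(1 - γ)² - γ³` is strictly decreasing, so `γc ≤ γ` iff `(1 - γ)² ≤ γ³`.

In that case, for every single transaction `Z`, the weights `wt γ Z` of the premises combined with
coefficients `γ², γ(1-γ), (1-γ)²` are bounded by `γ² - γ + 1` times the weight of the conclusion;
summing over the dataset yields the entailment. Otherwise one transaction `BCDH` violating the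
conclusion is compensated by enough copies of `ABCH`, `ACD` and `ABCD` to satisfy all premises:
their multiplicities solve a linear system whose determinant is `(1 - γ)² - γ³ > 0`.
-/

section Counting

variable {n : ℕ}

theorem cntD_cons (Z : Finset (Fin n)) (D : Multiset (Finset (Fin n))) (X : Finset (Fin n)) :
    cntD (Z ::ₘ D) X = cntD D X + if X ⊆ Z then 1 else 0 := by
  unfold cntD
  split_ifs with h <;> simp [h]

theorem cntD_add (D D' : Multiset (Finset (Fin n))) (X : Finset (Fin n)) :
    cntD (D + D') X = cntD D X + cntD D' X := by
  simp [cntD, Multiset.filter_add]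

theorem cntD_replicate (m : ℕ) (Z X : Finset (Fin n)) :
    cntD (Multiset.replicate m Z) X = if X ⊆ Z then m else 0 := by
  induction m with
  | zero => simp [cntD]
  | succ m ih => rw [Multiset.replicate_succ, cntD_cons, ih]; split_ifs <;> rfl

theorem cntD_le_cntD_of_subset (D : Multiset (Finset (Fin n))) {X X' : Finset (Fin n)} (h : X ⊆ X') :
    cntD D X' ≤ cntD D X :=
  Multiset.card_le_card (Multiset.monotone_filter_right _ fun _ hZ => h.trans hZ)

theorem sum_map_wt (γ : ℝ) (D : Multiset (Finset (Fin n))) (X Y : Finset (Fin n)) :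
    (D.map fun Z => wt γ Z X Y).sum = cntD D (X ∪ Y) - γ * cntD D X := by
  induction D using Multiset.induction_on with
  | empty => simp [cntD]
  | cons Z D ih =>
    rw [Multiset.map_cons, Multiset.sum_cons, ih, cntD_cons, cntD_cons, wt]
    by_cases hXY : X ∪ Y ⊆ Z
    · simp only [hXY, (union_subset_iff.1 hXY).1, if_true]; push_cast; ring
    · by_cases hX : X ⊆ Z <;> simp only [hXY, hX, if_true, if_false] <;> push_cast <;> ring

theorem satPI_iff_sum_wt_nonneg (γ : ℝ) (D : Multiset (Finset (Fin n))) (X Y : Finset (Fin n)) :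
    satPI γ D X Y ↔ 0 ≤ (D.map fun Z => wt γ Z X Y).sum := by
  rw [sum_map_wt, sub_nonneg, satPI]
  refine ⟨?_, Or.inr⟩
  rintro (h | h)
  · have hXY : cntD D (X ∪ Y) = 0 := Nat.eq_zero_of_le_zero (h ▸ cntD_le_cntD_of_subset D subset_union_left)
    simp [h, hXY]
  · exact h

theorem satPI_of_sum_wt_le {ι : Type*} {γ μ : ℝ} {D : Multiset (Finset (Fin n))} {s : Finset ι}
    {P : ι → Finset (Fin n) × Finset (Fin n)} {c : ι → ℝ} {X Y : Finset (Fin n)}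
    (hc : ∀ i ∈ s, 0 ≤ c i) (hμ : 0 < μ)
    (hwt : ∀ Z, ∑ i ∈ s, c i * wt γ Z (P i).1 (P i).2 ≤ μ * wt γ Z X Y)
    (hD : ∀ i ∈ s, satPI γ D (P i).1 (P i).2) : satPI γ D X Y := by
  simp only [satPI_iff_sum_wt_nonneg] at hD ⊢
  refine nonneg_of_mul_nonneg_right ?_ hμ
  calc 0 ≤ ∑ i ∈ s, c i * (D.map fun Z => wt γ Z (P i).1 (P i).2).sum :=
        sum_nonneg fun i hi => mul_nonneg (hc i hi) (hD i hi)
    _ = (D.map fun Z => ∑ i ∈ s, c i * wt γ Z (P i).1 (P i).2).sum := by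
        simp_rw [← Multiset.sum_map_mul_left]
        exact Multiset.sum_map_sum_map _ _
    _ ≤ (D.map fun Z => μ * wt γ Z X Y).sum := Multiset.sum_map_le_sum_map _ _ fun Z _ => hwt Z
    _ = μ * (D.map fun Z => wt γ Z X Y).sum := Multiset.sum_map_mul_left

end Counting

theorem wt_premises_le_wt_conclusion {γ : ℝ} (hγ0 : 0 ≤ γ) (hγ1 : γ ≤ 1) (h : (1 - γ) ^ 2 ≤ γ ^ 3)
    (Z : Finset (Fin 5)) :
    γ ^ 2 * wt γ Z {1} {0, 2, 4} + γ * (1 - γ) * wt γ Z {2} {0, 3}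
      + (1 - γ) ^ 2 * wt γ Z {3} {0, 1} ≤ (γ ^ 2 - γ + 1) * wt γ Z {1, 2, 3, 4} {0} := by
  simp only [wt, union_subset_iff, insert_subset_iff, singleton_subset_iff]
  by_cases h0 : (0 : Fin 5) ∈ Z <;> by_cases h1 : (1 : Fin 5) ∈ Z <;>
    by_cases h2 : (2 : Fin 5) ∈ Z <;> by_cases h3 : (3 : Fin 5) ∈ Z <;>
    by_cases h4 : (4 : Fin 5) ∈ Z <;>
    simp only [h0, h1, h2, h3, h4, and_true, and_false, if_true, if_false] <;>
    nlinarith [mul_nonneg hγ0 (sub_nonneg.2 hγ1), mul_nonneg hγ0 hγ0]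

theorem satPI_of_sq_le_cube {γ : ℝ} (hγ0 : 0 ≤ γ) (hγ1 : γ ≤ 1) (h : (1 - γ) ^ 2 ≤ γ ^ 3)
    (D : Multiset (Finset (Fin 5))) (h1 : satPI γ D {1} {0, 2, 4}) (h2 : satPI γ D {2} {0, 3})
    (h3 : satPI γ D {3} {0, 1}) : satPI γ D {1, 2, 3, 4} {0} := by
  refine satPI_of_sum_wt_le (s := univ) (P := ![({1}, {0, 2, 4}), ({2}, {0, 3}), ({3}, {0, 1})])
    (c := ![γ ^ 2, γ * (1 - γ), (1 - γ) ^ 2]) (μ := γ ^ 2 - γ + 1) ?_ (by nlinarith) ?_ ?_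
  · intro i _
    fin_cases i <;> simp <;> positivity
  · intro Z
    simpa [Fin.sum_univ_three] using wt_premises_le_wt_conclusion hγ0 hγ1 h Z
  · intro i _
    fin_cases i <;> assumption

def counterDataset (a b c : ℕ) : Multiset (Finset (Fin 5)) :=
  {1, 2, 3, 4} ::ₘ (Multiset.replicate a {0, 1, 2, 4} + Multiset.replicate b {0, 2, 3}
    + Multiset.replicate c {0, 1, 2, 3})

theorem exists_nat_slack {γ : ℝ} (hγ0 : 0 < γ) (hγ1 : γ < 1) (h : γ ^ 3 < (1 - γ) ^ 2) :
    ∃ a b c : ℕ, γ * (1 + c) ≤ (1 - γ) * a ∧ γ * (1 + a) ≤ (1 - γ) * (b + c) ∧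
      γ * (1 + b) ≤ (1 - γ) * c := by
  have hf : 0 < (1 - γ) ^ 2 - γ ^ 3 := sub_pos.2 h
  -- the real solution with `2` in place of `1` leaves room for rounding up
  set x := 2 * γ / ((1 - γ) ^ 2 - γ ^ 3) with hx_def
  set y := 2 * γ ^ 2 / ((1 - γ) ^ 2 - γ ^ 3) with hy_def
  set z := 2 * γ * (1 - γ + γ ^ 2) / ((1 - γ) ^ 2 - γ ^ 3) with hz_def
  have hxz : (1 - γ) * x = γ * (2 + z) := by rw [hx_def, hz_def]; field_simp; ring
  have hxyz : (1 - γ) * (y + z) = γ * (2 + x) := by rw [hx_def, hy_def, hz_def]; field_simp; ring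
  have hyz : (1 - γ) * z = γ * (2 + y) := by rw [hy_def, hz_def]; field_simp; ring
  have hceil (v : ℝ) (hv : 0 ≤ v) : γ * (1 + ⌈v⌉₊) ≤ γ * (2 + v) := by
    nlinarith [Nat.ceil_lt_add_one hv]
  have hround (v : ℝ) (a : ℕ) (hv : v ≤ a) : (1 - γ) * v ≤ (1 - γ) * a :=
    mul_le_mul_of_nonneg_left hv (by linarith)
  have hx : 0 ≤ x := by positivity
  have hy : 0 ≤ y := by positivity
  have hz : 0 ≤ z := by positivity
  refine ⟨⌈x⌉₊, ⌈y⌉₊, ⌈z⌉₊, ?_, ?_, ?_⟩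
  · linarith [hceil z hz, hround x _ (Nat.le_ceil x)]
  · linarith [hceil x hx, hround y _ (Nat.le_ceil y), hround z _ (Nat.le_ceil z)]
  · linarith [hceil y hy, hround z _ (Nat.le_ceil z)]

theorem exists_counterexample {γ : ℝ} (hγ0 : 0 < γ) (hγ1 : γ < 1) (h : γ ^ 3 < (1 - γ) ^ 2) :
    ∃ D : Multiset (Finset (Fin 5)), satPI γ D {1} {0, 2, 4} ∧ satPI γ D {2} {0, 3} ∧
      satPI γ D {3} {0, 1} ∧ ¬ satPI γ D {1, 2, 3, 4} {0} := by
  obtain ⟨a, b, c, h1, h2, h3⟩ := exists_nat_slack hγ0 hγ1 h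
  refine ⟨counterDataset a b c, ?_, ?_, ?_, ?_⟩ <;>
    simp +decide [satPI, counterDataset, cntD_cons, cntD_add, cntD_replicate] <;>
    linarith

theorem strictAnti_sq_sub_cube : StrictAnti fun x : ℝ => (1 - x) ^ 2 - x ^ 3 := by
  intro x y hxy
  nlinarith [mul_pos (sub_pos.2 hxy) (by nlinarith [sq_nonneg (x + y - 2/3), sq_nonneg (x - y)] :
    0 < 2 - x - y + x ^ 2 + x * y + y ^ 2)]

theorem le_iff_sq_le_cube {γc : ℝ} (hc0 : γc ≠ 0)
    (hceq : 1 - γc + (1 - γc) ^ 2 / γc + (1 - γc) ^ 3 / γc ^ 2 = 1) (γ : ℝ) :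
    γc ≤ γ ↔ (1 - γ) ^ 2 ≤ γ ^ 3 := by
  have hroot : (1 - γc) ^ 2 - γc ^ 3 = 0 := by
    field_simp at hceq
    linear_combination hceq
  rw [← strictAnti_sq_sub_cube.le_iff_ge, hroot, sub_nonpos]

theorem stmt19_general (γc : ℝ) (hc0 : 0 < γc)
    (hceq : 1 - γc + (1 - γc) ^ 2 / γc + (1 - γc) ^ 3 / γc ^ 2 = 1)
    (γ : ℝ) (hγ0 : 0 < γ) (hγ1 : γ < 1) :
    (∀ D : Multiset (Finset (Fin 5)),
        satPI γ D {1} {0, 2, 4} → satPI γ D {2} {0, 3} → satPI γ D {3} {0, 1} →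
        satPI γ D {1, 2, 3, 4} {0}) ↔ γc ≤ γ := by
  rw [le_iff_sq_le_cube hc0.ne' hceq]
  constructor
  · intro hent
    by_contra! h
    obtain ⟨D, h1, h2, h3, hD⟩ := exists_counterexample hγ0 hγ1 h
    exact hD (hent D h1 h2 h3)
  · exact satPI_of_sq_le_cube hγ0.le hγ1.le

theorem stmt19 (γc : ℝ) (hc0 : 0 < γc) (hc1 : γc < 1)
    (hceq : 1 - γc + (1 - γc) ^ 2 / γc + (1 - γc) ^ 3 / γc ^ 2 = 1)
    (γ : ℝ) (hγ0 : 0 < γ) (hγ1 : γ < 1) :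
    (∀ D : Multiset (Finset (Fin 5)),
        satPI γ D {1} {0, 2, 4} → satPI γ D {2} {0, 3} → satPI γ D {3} {0, 1} →
        satPI γ D {1, 2, 3, 4} {0}) ↔ γc ≤ γ :=
  stmt19_general γc hc0 hceq γ hγ0 hγ1
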